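/- arXiv:1803.04798 — 5 statements merged into one kernel-verified Lean document; each statement's English description precedes it below -/
import Mathlib

section
/- Let H be an m×n matrix with entries in {0,1} such that every column of H is nonzero (every variable index i belongs to N(c_j) for some j). For every LPM-feasible pair (f, w): all values f_i (i = 1,…,n) are integers if and only if all values w_{jS} (j ∈ {1,…,m}, S ∈ ε_j) are integers; moreover, in that case all f_i and all w_{jS} lie in {0,1}. -/
/-!
Every `f i` is a marginal `∑_{S ∋ i} w j S` of the probability vector `w j` on `ε_j`, for some
check `j` containing `i`; hence `0 ≤ f i ≤ 1`, and integral weights give integral marginals.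
Conversely, if all marginals of `w j` are `0` or `1`, let `T` be the set of `i ∈ N(c_j)` with
marginal `1`. A set `S ≠ T` contains some `i` of marginal `0` or misses some `i` of marginal `1`;
either way `w j S = 0`, so all the mass sits on `T`.
-/

open scoped Classical

/-- The neighborhood `N(c_j)` of check node `j`: the variable indices `i` with `H j i = 1`. -/
noncomputable def Ncheck {m n : ℕ} (H : Fin m → Fin n → ℝ) (j : Fin m) : Finset (Fin n) :=
  Finset.univ.filter fun i => H j i = 1

/-- `ε_j`: the collection of even-cardinality subsets of `N(c_j)` (including `∅`). -/
noncomputable def eps {m n : ℕ} (H : Fin m → Fin n → ℝ) (j : Fin m) :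
    Finset (Finset (Fin n)) :=
  (Ncheck H j).powerset.filter fun S => Even S.card

/-- LPM feasibility of a pair `(f, w)`. -/
def LPMFeasible {m n : ℕ} (H : Fin m → Fin n → ℝ)
    (f : Fin n → ℝ) (w : Fin m → Finset (Fin n) → ℝ) : Prop :=
  (∀ i, 0 ≤ f i) ∧
  (∀ j, ∀ S ∈ eps H j, 0 ≤ w j S) ∧
  (∀ j, ∑ S ∈ eps H j, w j S = 1) ∧
  (∀ j, ∀ i ∈ Ncheck H j, f i = ∑ S ∈ (eps H j).filter (fun S => i ∈ S), w j S)

open Finset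

section Weights

variable {β : Type*} {s : Finset β} {w : β → ℝ}

theorem sum_filter_le_one_of_nonneg (hw : ∀ b ∈ s, 0 ≤ w b) (h1 : ∑ b ∈ s, w b = 1)
    (p : β → Prop) [DecidablePred p] : ∑ b ∈ s with p b, w b ≤ 1 :=
  h1 ▸ sum_le_sum_of_subset_of_nonneg (filter_subset _ _) fun b hb _ => hw b hb

theorem eq_zero_of_sum_filter_eq_zero (hw : ∀ b ∈ s, 0 ≤ w b) {p : β → Prop} [DecidablePred p]
    (h0 : ∑ b ∈ s with p b, w b = 0) {b : β} (hb : b ∈ s) (hpb : p b) : w b = 0 :=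
  (sum_eq_zero_iff_of_nonneg fun c hc => hw c (mem_filter.1 hc).1).1 h0 b (mem_filter.2 ⟨hb, hpb⟩)

theorem eq_zero_of_sum_filter_eq_one (hw : ∀ b ∈ s, 0 ≤ w b) (h1 : ∑ b ∈ s, w b = 1)
    {p : β → Prop} [DecidablePred p] (hp1 : ∑ b ∈ s with p b, w b = 1) {b : β} (hb : b ∈ s)
    (hpb : ¬p b) : w b = 0 := by
  refine eq_zero_of_sum_filter_eq_zero (p := fun b => ¬p b) hw ?_ hb hpb
  linarith [sum_filter_add_sum_filter_not s p w]

theorem exists_int_sum_eq (hw : ∀ b ∈ s, ∃ k : ℤ, w b = k) : ∃ k : ℤ, ∑ b ∈ s, w b = k :=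
  sum_induction w (fun x => ∃ k : ℤ, x = k)
    (fun _ _ ⟨a, ha⟩ ⟨b, hb⟩ => ⟨a + b, by rw [ha, hb, Int.cast_add]⟩) ⟨0, Int.cast_zero.symm⟩ hw

end Weights

theorem eq_zero_or_one_of_exists_int_eq {x : ℝ} (hx : ∃ k : ℤ, x = k) (h0 : 0 ≤ x) (h1 : x ≤ 1) :
    x = 0 ∨ x = 1 := by
  obtain ⟨k, rfl⟩ := hx
  have hk0 : (0 : ℤ) ≤ k := by exact_mod_cast h0
  have hk1 : k ≤ 1 := by exact_mod_cast h1
  interval_cases k <;> simp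

theorem eq_zero_or_one_of_marginals_eq_zero_or_one {α : Type*} [DecidableEq α] {N : Finset α}
    {s : Finset (Finset α)} {w : Finset α → ℝ} (hsN : ∀ S ∈ s, S ⊆ N) (hw : ∀ S ∈ s, 0 ≤ w S)
    (h1 : ∑ S ∈ s, w S = 1)
    (hmarg : ∀ i ∈ N, ∑ S ∈ s with i ∈ S, w S = 0 ∨ ∑ S ∈ s with i ∈ S, w S = 1) :
    ∀ S ∈ s, w S = 0 ∨ w S = 1 := by
  set T := {i ∈ N | ∑ S ∈ s with i ∈ S, w S = 1}
  have hvanish : ∀ S ∈ s, S ≠ T → w S = 0 := by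
    intro S hS hST
    obtain ⟨i, hi⟩ : ∃ i, ¬(i ∈ S ↔ i ∈ T) := by simpa [Finset.ext_iff] using hST
    by_cases hiS : i ∈ S
    · have hiN := hsN S hS hiS
      have hi1 : ¬∑ S ∈ s with i ∈ S, w S = 1 := by simpa [T, hiS, hiN] using hi
      exact eq_zero_of_sum_filter_eq_zero hw ((hmarg i hiN).resolve_right hi1) hS hiS
    · have hiT : i ∈ T := by tauto
      exact eq_zero_of_sum_filter_eq_one hw h1 (mem_filter.1 hiT).2 hS hiS
  intro S hS
  by_cases hST : S = T
  · exact Or.inr (h1 ▸ (sum_eq_single_of_mem S hS fun b hb hbS => hvanish b hb (hST ▸ hbS)).symm)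
  · exact Or.inl (hvanish S hS hST)

theorem mem_Ncheck {m n : ℕ} {H : Fin m → Fin n → ℝ} {j : Fin m} {i : Fin n} (h : H j i = 1) :
    i ∈ Ncheck H j :=
  mem_filter.2 ⟨mem_univ i, h⟩

theorem subset_Ncheck_of_mem_eps {m n : ℕ} {H : Fin m → Fin n → ℝ} {j : Fin m}
    {S : Finset (Fin n)} (hS : S ∈ eps H j) : S ⊆ Ncheck H j :=
  mem_powerset.1 (mem_filter.1 hS).1

namespace LPMFeasible

variable {m n : ℕ} {H : Fin m → Fin n → ℝ} {f : Fin n → ℝ} {w : Fin m → Finset (Fin n) → ℝ}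
  {i : Fin n} {j : Fin m}

theorem le_one (hfeas : LPMFeasible H f w) (hji : H j i = 1) : f i ≤ 1 :=
  hfeas.2.2.2 j i (mem_Ncheck hji) ▸ sum_filter_le_one_of_nonneg (hfeas.2.1 j) (hfeas.2.2.1 j) _

theorem exists_int_eq_of_weights (hfeas : LPMFeasible H f w) (hji : H j i = 1)
    (hw : ∀ S ∈ eps H j, ∃ k : ℤ, w j S = k) : ∃ k : ℤ, f i = k :=
  hfeas.2.2.2 j i (mem_Ncheck hji) ▸ exists_int_sum_eq fun S hS => hw S (mem_filter.1 hS).1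

theorem weights_eq_zero_or_one (hfeas : LPMFeasible H f w) (hf : ∀ i, f i = 0 ∨ f i = 1) :
    ∀ j, ∀ S ∈ eps H j, w j S = 0 ∨ w j S = 1 := fun j =>
  eq_zero_or_one_of_marginals_eq_zero_or_one (fun _ => subset_Ncheck_of_mem_eps) (hfeas.2.1 j)
    (hfeas.2.2.1 j) fun i hi => hfeas.2.2.2 j i hi ▸ hf i

end LPMFeasible

theorem LPM_f_integral_iff_w_integral_general
    (m n : ℕ) (H : Fin m → Fin n → ℝ)
    (hcol : ∀ i : Fin n, ∃ j : Fin m, H j i = 1)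
    (f : Fin n → ℝ) (w : Fin m → Finset (Fin n) → ℝ)
    (hfeas : LPMFeasible H f w) :
    ((∀ i, ∃ k : ℤ, f i = (k : ℝ)) ↔
      (∀ j, ∀ S ∈ eps H j, ∃ k : ℤ, w j S = (k : ℝ))) ∧
    ((∀ i, ∃ k : ℤ, f i = (k : ℝ)) →
      (∀ i, f i = 0 ∨ f i = 1) ∧ (∀ j, ∀ S ∈ eps H j, w j S = 0 ∨ w j S = 1)) := by
  have hf01 : (∀ i, ∃ k : ℤ, f i = k) → ∀ i, f i = 0 ∨ f i = 1 := fun hint i =>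
    let ⟨_, hji⟩ := hcol i
    eq_zero_or_one_of_exists_int_eq (hint i) (hfeas.1 i) (hfeas.le_one hji)
  refine ⟨⟨fun hint j S hS => ?_, fun hwint i => ?_⟩,
    fun hint => ⟨hf01 hint, hfeas.weights_eq_zero_or_one (hf01 hint)⟩⟩
  · rcases hfeas.weights_eq_zero_or_one (hf01 hint) j S hS with h | h
    exacts [⟨0, by simp [h]⟩, ⟨1, by simp [h]⟩]
  · obtain ⟨j, hji⟩ := hcol i
    exact hfeas.exists_int_eq_of_weights hji (hwint j)

/-- If every column of `H` is nonzero, then for any LPM-feasible `(f, w)`: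
all `f i` are integral iff all `w j S` (for `S ∈ ε_j`) are integral; and in that case
all of them lie in `{0, 1}`. -/
theorem LPM_f_integral_iff_w_integral
    (m n : ℕ) (H : Fin m → Fin n → ℝ)
    (hH : ∀ j i, H j i = 0 ∨ H j i = 1)
    (hcol : ∀ i : Fin n, ∃ j : Fin m, H j i = 1)
    (f : Fin n → ℝ) (w : Fin m → Finset (Fin n) → ℝ)
    (hfeas : LPMFeasible H f w) :
    ((∀ i, ∃ k : ℤ, f i = (k : ℝ)) ↔
      (∀ j, ∀ S ∈ eps H j, ∃ k : ℤ, w j S = (k : ℝ))) ∧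
    ((∀ i, ∃ k : ℤ, f i = (k : ℝ)) →
      (∀ i, f i = 0 ∨ f i = 1) ∧ (∀ j, ∀ S ∈ eps H j, w j S = 0 ∨ w j S = 1)) :=
  LPM_f_integral_iff_w_integral_general m n H hcol f w hfeas
end

section
/- Let r ∈ {0,1}^n, let 0 < p < 1/2, and set a = log((1−p)/p). Let F ⊆ {0,1}^n be any set of binary feasible solutions, let f̄ ∈ F with z_UB = ∑_i γ_i f̄_i, let B ⊆ {0,1}^n (a branch), and let z ∈ ℝ be a lower bound satisfying z ≤ ∑_i γ_i f_i for every f ∈ F ∩ B. If z > z_UB − a, then every f ∈ F ∩ B satisfies ∑_i γ_i f_i ≥ z_UB; that is, no binary feasible solution in the branch has objective value strictly better than z_UB. -/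
/-!
Every log-likelihood weight is `a` or `-a`, so the objective value of any binary vector is an
integer multiple of `a > 0`. Two values on this lattice that differ by less than `a` are ordered
as their lattice indices are; hence a value bounded below by `z > z_UB - a` is at least `z_UB`.
-/

open AddSubgroup

theorem le_of_sub_lt_of_mem_zmultiples {α : Type*} [AddCommGroup α] [LinearOrder α]
    [IsOrderedAddMonoid α] {a x y : α} (ha : 0 < a) (hx : x ∈ zmultiples a)
    (hy : y ∈ zmultiples a) (h : y - a < x) : y ≤ x := by
  obtain ⟨k, rfl⟩ := mem_zmultiples_iff.mp hx
  obtain ⟨m, rfl⟩ := mem_zmultiples_iff.mp hy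
  have hmk : m - 1 < k := by
    rwa [← zsmul_lt_zsmul_iff_left ha, sub_smul, one_zsmul]
  exact zsmul_le_zsmul_left ha.le (by omega)

theorem sum_mul_mem_zmultiples_of_binary {ι R : Type*} [Fintype ι] [Ring R] {a : R}
    {γ f : ι → R} (hγ : ∀ i, γ i ∈ zmultiples a) (hf : ∀ i, f i = 0 ∨ f i = 1) :
    ∑ i, γ i * f i ∈ zmultiples a := by
  refine sum_mem fun i _ => ?_
  rcases hf i with h | h <;> simp [h, hγ i]

theorem Real.log_div_one_sub_eq_neg (p : ℝ) :
    Real.log (p / (1 - p)) = -Real.log ((1 - p) / p) := by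
  rw [← Real.log_inv, inv_div]

theorem Real.log_one_sub_div_pos {p : ℝ} (hp0 : 0 < p) (hp1 : p < 1 / 2) :
    0 < Real.log ((1 - p) / p) :=
  Real.log_pos <| (one_lt_div hp0).mpr (by linarith)

theorem pruning_rule_general
    (n : ℕ) (r : Fin n → ℝ)
    (p : ℝ) (hp0 : 0 < p) (hp1 : p < 1 / 2)
    (γ : Fin n → ℝ)
    (hγ : ∀ i, γ i = if r i = 1 then Real.log (p / (1 - p)) else Real.log ((1 - p) / p))
    (a : ℝ) (ha : a = Real.log ((1 - p) / p))
    (F : Set (Fin n → ℝ)) (hFbin : ∀ f ∈ F, ∀ i, f i = 0 ∨ f i = 1)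
    (fbar : Fin n → ℝ) (hfbar : fbar ∈ F)
    (zUB : ℝ) (hzUB : zUB = ∑ i, γ i * fbar i)
    (B : Set (Fin n → ℝ))
    (z : ℝ) (hz : ∀ f ∈ F ∩ B, z ≤ ∑ i, γ i * f i)
    (hprune : z > zUB - a) :
    ∀ f ∈ F ∩ B, zUB ≤ ∑ i, γ i * f i := by
  subst ha hzUB
  have hγa : ∀ i, γ i ∈ zmultiples (Real.log ((1 - p) / p)) := by
    intro i
    rw [hγ i, Real.log_div_one_sub_eq_neg]
    split_ifs
    exacts [neg_mem (mem_zmultiples _), mem_zmultiples _]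
  intro f hf
  exact le_of_sub_lt_of_mem_zmultiples (Real.log_one_sub_div_pos hp0 hp1)
    (sum_mul_mem_zmultiples_of_binary hγa (hFbin f hf.1))
    (sum_mul_mem_zmultiples_of_binary hγa (hFbin fbar hfbar))
    (hprune.trans_le (hz f hf))

/-- Pruning rule. If a lower bound `z` on the objective values of the binary
feasible solutions in a branch `B` satisfies `z > z_UB - a`, where `z_UB` is the
objective value of an incumbent binary feasible solution, then no binary feasible
solution in the branch is strictly better than `z_UB`. -/
theorem pruning_rule
    (n : ℕ) (r : Fin n → ℝ) (hr : ∀ i, r i = 0 ∨ r i = 1)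
    (p : ℝ) (hp0 : 0 < p) (hp1 : p < 1 / 2)
    (γ : Fin n → ℝ)
    (hγ : ∀ i, γ i = if r i = 1 then Real.log (p / (1 - p)) else Real.log ((1 - p) / p))
    (a : ℝ) (ha : a = Real.log ((1 - p) / p))
    (F : Set (Fin n → ℝ)) (hFbin : ∀ f ∈ F, ∀ i, f i = 0 ∨ f i = 1)
    (fbar : Fin n → ℝ) (hfbar : fbar ∈ F)
    (zUB : ℝ) (hzUB : zUB = ∑ i, γ i * fbar i)
    (B : Set (Fin n → ℝ))
    (z : ℝ) (hz : ∀ f ∈ F ∩ B, z ≤ ∑ i, γ i * f i)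
    (hprune : z > zUB - a) :
    ∀ f ∈ F ∩ B, zUB ≤ ∑ i, γ i * f i :=
  pruning_rule_general n r p hp0 hp1 γ hγ a ha F hFbin fbar hfbar zUB hzUB B z hz hprune
end

section
/- Let a_1 ≤ a_2 ≤ … ≤ a_n be real numbers sorted in nondecreasing order. Then the minimum of ∑_{i∈S} a_i over all subsets S ⊆ {1,…,n} of even cardinality (including S = ∅) equals ∑_{t=1}^{⌊n/2⌋} min(0, a_{2t−1} + a_{2t}). (This is the value computed by the greedy pairing procedure of Algorithm 1, which pairs consecutive elements in sorted order and adds a pair exactly when its sum is negative.) -/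
/-!
Since `a` is sorted and the `j`-th smallest element `s_j` of an even set `S ⊆ {0, …, n-1}`
of size `2k` is at least `j`, we have `a s_j ≥ a j`, so
`∑ i ∈ S, a i ≥ ∑ t < k, (a (2t) + a (2t+1))`. Each such pair sum is at least
`min 0 (a (2t) + a (2t+1))`, and the terms with `k ≤ t < n/2` are nonpositive.
The greedy set, the union of the pairs `{2t, 2t+1}` with negative sum, attains the bound.
-/

open Finset

namespace Finset

def pairUnion (T : Finset ℕ) : Finset ℕ :=
  T.biUnion fun t => {2 * t, 2 * t + 1}

lemma pairwiseDisjoint_pairs (T : Finset ℕ) :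
    (T : Set ℕ).PairwiseDisjoint fun t => ({2 * t, 2 * t + 1} : Finset ℕ) := by
  intro x _ y _ hxy
  simp only [Function.onFun, disjoint_left, mem_insert, mem_singleton]
  omega

lemma card_pairUnion (T : Finset ℕ) : #(pairUnion T) = 2 * #T := by
  rw [pairUnion, card_biUnion (pairwiseDisjoint_pairs T), mul_comm, ← smul_eq_mul,
    ← sum_const]
  exact sum_congr rfl fun t _ => card_pair (by omega)

lemma sum_pairUnion {M : Type*} [AddCommMonoid M] (f : ℕ → M) (T : Finset ℕ) :
    ∑ i ∈ pairUnion T, f i = ∑ t ∈ T, (f (2 * t) + f (2 * t + 1)) := by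
  rw [pairUnion, sum_biUnion (pairwiseDisjoint_pairs T)]
  exact sum_congr rfl fun t _ => sum_pair (by omega)

lemma pairUnion_range (k : ℕ) : pairUnion (range k) = range (2 * k) := by
  ext i
  simp only [pairUnion, mem_biUnion, mem_range, mem_insert, mem_singleton]
  constructor
  · omega
  · exact fun hi => ⟨i / 2, by omega, by omega⟩

lemma pairUnion_mono {S T : Finset ℕ} (h : S ⊆ T) : pairUnion S ⊆ pairUnion T :=
  biUnion_subset_biUnion_of_subset_left _ h

lemma sum_range_card_le_sum_of_monotoneOn {M : Type*} [AddCommMonoid M] [PartialOrder M]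
    [IsOrderedAddMonoid M] {n : ℕ} {a : ℕ → M} (ha : MonotoneOn a (Set.Iio n))
    {S : Finset ℕ} (hS : S ⊆ range n) : ∑ i ∈ range #S, a i ≤ ∑ i ∈ S, a i := by
  induction S using Finset.induction_on_max with
  | empty => simp
  | insert x s hlt ih =>
    have hx : x ∉ s := fun hx => (hlt x hx).false
    have hxn : x < n := mem_range.mp (hS (mem_insert_self x s))
    have hcard : #s ≤ x := by
      simpa using card_le_card fun y hy => mem_range.mpr (hlt y hy)
    rw [card_insert_of_notMem hx, sum_range_succ, sum_insert hx, add_comm (a x)]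
    exact add_le_add (ih ((subset_insert x s).trans hS))
      (ha (show #s < n by omega) hxn hcard)

end Finset

/-- For reals `a 0 ≤ a 1 ≤ … ≤ a (n-1)` in nondecreasing order, the minimum
of `∑ i ∈ S, a i` over even-cardinality subsets `S ⊆ {0,…,n-1}` (including `S = ∅`)
equals `∑ t < n/2, min 0 (a (2t) + a (2t+1))`, the value of the greedy pairing
procedure of Algorithm 1. -/
theorem even_subset_min_sum
    (n : ℕ) (a : ℕ → ℝ) (hmono : ∀ i j, i ≤ j → j < n → a i ≤ a j) :
    IsLeast {x : ℝ | ∃ S ⊆ Finset.range n, Even S.card ∧ x = ∑ i ∈ S, a i}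
      (∑ t ∈ Finset.range (n / 2), min 0 (a (2 * t) + a (2 * t + 1))) := by
  constructor
  · refine ⟨pairUnion ((range (n / 2)).filter fun t => a (2 * t) + a (2 * t + 1) < 0),
      ?_, ?_, ?_⟩
    · refine (pairUnion_mono (filter_subset _ _)).trans ?_
      rw [pairUnion_range]
      exact range_subset_range.mpr (Nat.mul_div_le n 2)
    · rw [card_pairUnion]
      exact even_two_mul _
    · rw [sum_pairUnion, sum_filter]
      refine sum_congr rfl fun t _ => ?_
      split_ifs with h
      · exact min_eq_right h.le
      · exact min_eq_left (not_lt.mp h)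
  · rintro _ ⟨S, hS, ⟨k, hk⟩, rfl⟩
    have hkn : k ≤ n / 2 := by
      have := card_le_card hS
      rw [card_range] at this
      omega
    calc ∑ t ∈ range (n / 2), min 0 (a (2 * t) + a (2 * t + 1))
        ≤ ∑ t ∈ range k, min 0 (a (2 * t) + a (2 * t + 1)) :=
          sum_le_sum_of_subset_of_nonpos' (range_subset_range.mpr hkn)
            fun _ _ _ => min_le_left _ _
      _ ≤ ∑ t ∈ range k, (a (2 * t) + a (2 * t + 1)) :=
          sum_le_sum fun _ _ => min_le_right _ _
      _ = ∑ i ∈ range #S, a i := by rw [hk, ← two_mul, ← pairUnion_range, sum_pairUnion]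
      _ ≤ ∑ i ∈ S, a i :=
          sum_range_card_le_sum_of_monotoneOn (fun i _ j hj hij => hmono i j hij hj) hS
end

section
/- Let H be an m×n matrix with entries in {0,1} and let (f, w) be LPM-feasible with w real-valued (possibly fractional). If f is binary, i.e., f ∈ {0,1}^n, then f is a codeword: ∑_{i∈N(c_j)} f_i is even for every j. (In particular, every integral point of the LPM feasible region projects to a codeword.) -/
/-!
Since the weights `w j ·` form a probability distribution on `ε_j` whose marginals are the
binary values `f i`, every even set `S` of positive weight must contain exactly those `i ∈ N(c_j)`
with `f i = 1`: a marginal `0` forbids `i ∈ S`, a marginal `1` forbids `i ∉ S`. Hence the check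
sum `∑_{i ∈ N(c_j)} f i` equals `|S|`, which is even.
-/

open scoped Classical

open Finset

theorem Finset.sum_eq_card_filter_eq_one {ι : Type*} {s : Finset ι} {f : ι → ℝ}
    (hf : ∀ i ∈ s, f i = 0 ∨ f i = 1) : ∑ i ∈ s, f i = #(s.filter (f · = 1)) := by
  rw [← sum_boole]
  refine sum_congr rfl fun i hi => ?_
  rcases hf i hi with h | h <;> simp [h]

namespace Finset

variable {ι : Type*} [DecidableEq ι] {E : Finset (Finset ι)} {w : Finset ι → ℝ} {S : Finset ι} {i : ι}

theorem mem_of_sum_filter_mem_eq_one (hw0 : ∀ T ∈ E, 0 ≤ w T) (hw1 : ∑ T ∈ E, w T = 1)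
    (hi : ∑ T ∈ E.filter (i ∈ ·), w T = 1) (hS : S ∈ E) (hpos : 0 < w S) : i ∈ S := by
  by_contra hiS
  have hrest : ∑ T ∈ E.filter (i ∉ ·), w T = 0 := by
    linarith [sum_filter_add_sum_filter_not E (i ∈ ·) w]
  have hnonneg : ∀ T ∈ E.filter (i ∉ ·), 0 ≤ w T := fun T hT => hw0 T (mem_filter.mp hT).1
  have := (sum_eq_zero_iff_of_nonneg hnonneg).mp hrest S (mem_filter.mpr ⟨hS, hiS⟩)
  linarith

theorem not_mem_of_sum_filter_mem_eq_zero (hw0 : ∀ T ∈ E, 0 ≤ w T)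
    (hi : ∑ T ∈ E.filter (i ∈ ·), w T = 0) (hS : S ∈ E) (hpos : 0 < w S) : i ∉ S := by
  intro hiS
  have hnonneg : ∀ T ∈ E.filter (i ∈ ·), 0 ≤ w T := fun T hT => hw0 T (mem_filter.mp hT).1
  have := (sum_eq_zero_iff_of_nonneg hnonneg).mp hi S (mem_filter.mpr ⟨hS, hiS⟩)
  linarith

theorem eq_filter_of_marginal_binary {N : Finset ι} {f : ι → ℝ} (hEN : ∀ T ∈ E, T ⊆ N)
    (hw0 : ∀ T ∈ E, 0 ≤ w T) (hw1 : ∑ T ∈ E, w T = 1)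
    (hmarg : ∀ i ∈ N, f i = ∑ T ∈ E.filter (i ∈ ·), w T) (hbin : ∀ i ∈ N, f i = 0 ∨ f i = 1)
    (hS : S ∈ E) (hpos : 0 < w S) : S = N.filter (f · = 1) := by
  ext i
  rw [mem_filter]
  constructor
  · intro hiS
    have hiN := hEN S hS hiS
    refine ⟨hiN, (hbin i hiN).resolve_left fun h0 => ?_⟩
    exact not_mem_of_sum_filter_mem_eq_zero hw0 (h0 ▸ hmarg i hiN).symm hS hpos hiS
  · rintro ⟨hiN, h1⟩
    exact mem_of_sum_filter_mem_eq_one hw0 hw1 (h1 ▸ hmarg i hiN).symm hS hpos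

end Finset

theorem LPM_integral_point_is_codeword_general
    (m n : ℕ) (H : Fin m → Fin n → ℝ)
    (f : Fin n → ℝ) (w : Fin m → Finset (Fin n) → ℝ)
    (hfeas : LPMFeasible H f w)
    (hfbin : ∀ i, f i = 0 ∨ f i = 1) :
    ∀ j : Fin m, ∃ k : ℤ, (∑ i ∈ Ncheck H j, f i) = 2 * (k : ℝ) := by
  obtain ⟨-, hw0, hw1, hmarg⟩ := hfeas
  intro j
  obtain ⟨S, hS, hpos⟩ : ∃ S ∈ eps H j, 0 < w j S :=
    exists_lt_of_sum_lt (by simp [hw1 j])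
  have hSeq : S = (Ncheck H j).filter (f · = 1) :=
    eq_filter_of_marginal_binary (fun _ => subset_Ncheck_of_mem_eps) (hw0 j) (hw1 j) (hmarg j)
      (fun i _ => hfbin i) hS hpos
  obtain ⟨r, hr⟩ := (mem_filter.mp hS).2
  refine ⟨r, ?_⟩
  rw [sum_eq_card_filter_eq_one fun i _ => hfbin i, ← hSeq, hr]
  push_cast
  ring

/-- If `(f, w)` is LPM-feasible (with `w` possibly fractional) and `f` is
binary, then `f` is a codeword: each check's parity sum is even. -/
theorem LPM_integral_point_is_codeword
    (m n : ℕ) (H : Fin m → Fin n → ℝ)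
    (hH : ∀ j i, H j i = 0 ∨ H j i = 1)
    (f : Fin n → ℝ) (w : Fin m → Finset (Fin n) → ℝ)
    (hfeas : LPMFeasible H f w)
    (hfbin : ∀ i, f i = 0 ∨ f i = 1) :
    ∀ j : Fin m, ∃ k : ℤ, (∑ i ∈ Ncheck H j, f i) = 2 * (k : ℝ) :=
  LPM_integral_point_is_codeword_general m n H f w hfeas hfbin
end

section
/- Let H be an m×n matrix with entries in {0,1} and let f ∈ {0,1}^n be a codeword. Then for every check index j and every subset S ⊆ N(c_j) of odd cardinality, the inequality ∑_{i∈N(c_j)∖S} f_i + ∑_{i∈S} (1 − f_i) ≥ 1 holds. (These are the valid cuts used in the branch–price–and–cut method: they are satisfied by every codeword and hence valid for the IPM formulation.) -/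
/-!
Flipping the bits of `f` on `S` changes the parity of the weight of `f` on `N(c_j)` by `|S|`, which
is odd; since that weight is even, the flipped weight, which is exactly the left-hand side of the
cut, is an odd nonnegative integer and hence at least `1`.
-/

open scoped Classical

namespace Finset

variable {ι R : Type*}

theorem sum_eq_card_filter_of_binary [AddCommMonoidWithOne R] [DecidableEq R] {s : Finset ι}
    {f : ι → R} (hf : ∀ i ∈ s, f i = 0 ∨ f i = 1) :
    ∑ i ∈ s, f i = #{i ∈ s | f i = 1} := by
  rw [natCast_card_filter]
  refine sum_congr rfl fun i hi => ?_
  rcases hf i hi with h | h <;> simp [h]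

theorem sum_sdiff_add_sum_one_sub [DecidableEq ι] [CommRing R] {s t : Finset ι} (hts : t ⊆ s)
    (f : ι → R) :
    ∑ i ∈ s \ t, f i + ∑ i ∈ t, (1 - f i) = ∑ i ∈ s, f i - 2 * ∑ i ∈ t, f i + #t := by
  rw [← sum_sdiff hts, sum_sub_distrib, sum_const, nsmul_one]
  ring

theorem one_le_sum_sdiff_add_sum_one_sub [DecidableEq ι] [CommRing R] [LinearOrder R]
    [IsStrictOrderedRing R] {s t : Finset ι} (hts : t ⊆ s) {f : ι → R}
    (hf : ∀ i ∈ s, f i = 0 ∨ f i = 1) (heven : ∃ k : ℤ, ∑ i ∈ s, f i = 2 * (k : R))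
    (hodd : Odd #t) : 1 ≤ ∑ i ∈ s \ t, f i + ∑ i ∈ t, (1 - f i) := by
  obtain ⟨k, hk⟩ := heven
  set w : ℤ := 2 * (k - #{i ∈ t | f i = 1}) + #t
  have hw : ∑ i ∈ s \ t, f i + ∑ i ∈ t, (1 - f i) = w := by
    rw [sum_sdiff_add_sum_one_sub hts, hk,
      sum_eq_card_filter_of_binary fun i hi => hf i (hts hi)]
    push_cast [w]
    ring
  have hw_nonneg : 0 ≤ w := by
    have : (0 : R) ≤ ∑ i ∈ s \ t, f i + ∑ i ∈ t, (1 - f i) := by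
      refine add_nonneg (sum_nonneg fun i hi => ?_) (sum_nonneg fun i hi => ?_)
      · rcases hf i (sdiff_subset hi) with h | h <;> simp [h]
      · rcases hf i (hts hi) with h | h <;> simp [h]
    exact_mod_cast hw ▸ this
  have hw_odd : Odd w := (even_two_mul _).add_odd (by exact_mod_cast hodd)
  have hw_pos : 1 ≤ w := by
    obtain ⟨c, hc⟩ := hw_odd
    omega
  rw [hw]
  exact_mod_cast hw_pos

end Finset

theorem valid_cuts_hold_for_codewords_general
    (m n : ℕ) (H : Fin m → Fin n → ℝ)
    (f : Fin n → ℝ) (hfbin : ∀ i, f i = 0 ∨ f i = 1)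
    (hcode : ∀ j : Fin m, ∃ k : ℤ, (∑ i ∈ Ncheck H j, f i) = 2 * (k : ℝ)) :
    ∀ j : Fin m, ∀ S ⊆ Ncheck H j, Odd S.card →
      1 ≤ (∑ i ∈ Ncheck H j \ S, f i) + ∑ i ∈ S, (1 - f i) :=
  fun j _ hS hodd => Finset.one_le_sum_sdiff_add_sum_one_sub hS (fun i _ => hfbin i) (hcode j) hodd

/-- Every codeword `f` satisfies, for each check `j` and each odd-cardinality
subset `S ⊆ N(c_j)`, the valid cut
`∑_{i ∈ N(c_j) \ S} f i + ∑_{i ∈ S} (1 - f i) ≥ 1`. -/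
theorem valid_cuts_hold_for_codewords
    (m n : ℕ) (H : Fin m → Fin n → ℝ)
    (hH : ∀ j i, H j i = 0 ∨ H j i = 1)
    (f : Fin n → ℝ) (hfbin : ∀ i, f i = 0 ∨ f i = 1)
    (hcode : ∀ j : Fin m, ∃ k : ℤ, (∑ i ∈ Ncheck H j, f i) = 2 * (k : ℝ)) :
    ∀ j : Fin m, ∀ S ⊆ Ncheck H j, Odd S.card →
      1 ≤ (∑ i ∈ Ncheck H j \ S, f i) + ∑ i ∈ S, (1 - f i) :=
  valid_cuts_hold_for_codewords_general m n H f hfbin hcode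
end
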